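/- arXiv:2604.06491 — 2 statements merged into one kernel-verified Lean document; each statement's English description precedes it below -/
import Mathlib

section
/- For all positive real numbers u and v, u·log(u/v) − u + v ≥ (u − v)² / (2(u + v)). -/
/-- For `t ≥ 1`, `2(t-1)/(t+1) ≤ log t`. -/
lemma aux_log_lower {t : ℝ} (ht : 1 ≤ t) : 2 * (t - 1) / (t + 1) ≤ Real.log t := by
  have hd : ∀ x : ℝ, 1 < x → HasDerivAt (fun y : ℝ => Real.log y - 2 * (y - 1) / (y + 1))
      (x⁻¹ - (2 * 1 * (x + 1) - 2 * (x - 1) * 1) / (x + 1) ^ 2) x := by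
    intro x hx
    have hx0 : (0:ℝ) < x := by linarith
    have hx1 : x + 1 ≠ 0 := by linarith
    have h1 : HasDerivAt Real.log x⁻¹ x := Real.hasDerivAt_log (ne_of_gt hx0)
    have h2 : HasDerivAt (fun y : ℝ => 2 * (y - 1) / (y + 1))
        ((2 * 1 * (x + 1) - 2 * (x - 1) * 1) / (x + 1) ^ 2) x :=
      (((hasDerivAt_id x).sub_const 1).const_mul 2).div ((hasDerivAt_id x).add_const 1) hx1
    exact h1.sub h2
  have hmono : MonotoneOn (fun x : ℝ => Real.log x - 2 * (x - 1) / (x + 1)) (Set.Ici 1) := by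
    apply monotoneOn_of_deriv_nonneg (convex_Ici 1)
    · apply ContinuousOn.sub
      · exact Real.continuousOn_log.mono (fun x hx => by
          simp only [Set.mem_Ici] at hx
          simp only [Set.mem_compl_iff, Set.mem_singleton_iff]
          intro h; linarith)
      · apply ContinuousOn.div
        · fun_prop
        · fun_prop
        · intro x hx; simp only [Set.mem_Ici] at hx; intro h; linarith
    · intro x hx
      rw [interior_Ici] at hx
      exact (hd x hx).differentiableAt.differentiableWithinAt
    · intro x hx
      rw [interior_Ici] at hx
      have hx' : 1 < x := hx
      have hx0 : (0:ℝ) < x := by linarith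
      rw [(hd x hx').deriv]
      have key : (2 * 1 * (x + 1) - 2 * (x - 1) * 1) / (x + 1) ^ 2 ≤ x⁻¹ := by
        rw [inv_eq_one_div, div_le_div_iff₀ (by positivity) hx0]
        nlinarith [sq_nonneg (x - 1)]
      linarith
  have h := hmono (Set.self_mem_Ici) (Set.mem_Ici.mpr ht) ht
  simp only [Real.log_one] at h
  norm_num at h
  linarith

/-- For `t ≥ 1`, `log t ≤ (t^2 - 1)/(2t)`. -/
lemma aux_log_upper {t : ℝ} (ht : 1 ≤ t) : Real.log t ≤ (t ^ 2 - 1) / (2 * t) := by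
  have hd : ∀ x : ℝ, 1 < x → HasDerivAt (fun y : ℝ => (y ^ 2 - 1) / (2 * y) - Real.log y)
      ((2 * x * (2 * x) - (x ^ 2 - 1) * 2) / (2 * x) ^ 2 - x⁻¹) x := by
    intro x hx
    have hx0 : (0:ℝ) < x := by linarith
    have hx2 : 2 * x ≠ 0 := by positivity
    have h1 : HasDerivAt Real.log x⁻¹ x := Real.hasDerivAt_log (ne_of_gt hx0)
    have ha : HasDerivAt (fun y : ℝ => y ^ 2 - 1) (2 * x) x := by
      simpa using ((hasDerivAt_pow 2 x).sub_const 1)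
    have hb : HasDerivAt (fun y : ℝ => 2 * y) 2 x := by
      simpa using (hasDerivAt_id x).const_mul 2
    have h2 : HasDerivAt (fun y : ℝ => (y ^ 2 - 1) / (2 * y))
        ((2 * x * (2 * x) - (x ^ 2 - 1) * 2) / (2 * x) ^ 2) x := ha.div hb hx2
    exact h2.sub h1
  have hmono : MonotoneOn (fun x : ℝ => (x ^ 2 - 1) / (2 * x) - Real.log x) (Set.Ici 1) := by
    apply monotoneOn_of_deriv_nonneg (convex_Ici 1)
    · apply ContinuousOn.sub
      · apply ContinuousOn.div
        · fun_prop
        · fun_prop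
        · intro x hx; simp only [Set.mem_Ici] at hx; positivity
      · exact Real.continuousOn_log.mono (fun x hx => by
          simp only [Set.mem_Ici] at hx
          simp only [Set.mem_compl_iff, Set.mem_singleton_iff]
          intro h; linarith)
    · intro x hx
      rw [interior_Ici] at hx
      exact (hd x hx).differentiableAt.differentiableWithinAt
    · intro x hx
      rw [interior_Ici] at hx
      have hx' : 1 < x := hx
      have hx0 : (0:ℝ) < x := by linarith
      rw [(hd x hx').deriv]
      have key : x⁻¹ ≤ (2 * x * (2 * x) - (x ^ 2 - 1) * 2) / (2 * x) ^ 2 := by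
        rw [inv_eq_one_div, div_le_div_iff₀ hx0 (by positivity)]
        nlinarith [mul_nonneg hx0.le (sq_nonneg (x - 1))]
      linarith
  have h := hmono (Set.self_mem_Ici) (Set.mem_Ici.mpr ht) ht
  simp only [Real.log_one] at h
  norm_num at h
  linarith

/-- Pointwise generalized-KL lower bound. -/
theorem gkl_pointwise_lower_bound (u v : ℝ) (hu : 0 < u) (hv : 0 < v) :
    u * Real.log (u / v) - u + v ≥ (u - v) ^ 2 / (2 * (u + v)) := by
  have huv : 0 < u + v := by linarith
  rcases le_or_gt v u with h | h
  · -- u ≥ v : use log(u/v) ≥ 2(u-v)/(u+v)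
    have ht : 1 ≤ u / v := (one_le_div hv).mpr h
    have hlog := aux_log_lower ht
    have heq : 2 * (u / v - 1) / (u / v + 1) = 2 * (u - v) / (u + v) := by
      rw [div_eq_div_iff (by positivity) huv.ne']
      field_simp
    rw [heq] at hlog
    have h1 : u * (2 * (u - v) / (u + v)) ≤ u * Real.log (u / v) :=
      mul_le_mul_of_nonneg_left hlog hu.le
    have h1' : 2 * u * (u - v) ≤ u * Real.log (u / v) * (u + v) := by
      have : u * (2 * (u - v) / (u + v)) = 2 * u * (u - v) / (u + v) := by ring
      rw [this, div_le_iff₀ huv] at h1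
      linarith
    rw [ge_iff_le, div_le_iff₀ (by positivity : (0:ℝ) < 2 * (u + v))]
    nlinarith [h1', sq_nonneg (u - v)]
  · -- u < v : use log(u/v) = -log(v/u) ≥ (u^2 - v^2)/(2uv)
    have ht : 1 ≤ v / u := le_of_lt ((one_lt_div hu).mpr h)
    have hlog := aux_log_upper ht
    have heq : ((v / u) ^ 2 - 1) / (2 * (v / u)) = (v ^ 2 - u ^ 2) / (2 * (u * v)) := by
      rw [div_eq_div_iff (by positivity) (by positivity)]
      field_simp
    rw [heq] at hlog
    have hrw : Real.log (u / v) = -Real.log (v / u) := by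
      rw [← Real.log_inv]
      congr 1
      field_simp
    have hkey : (u ^ 2 - v ^ 2) / (2 * (u * v)) ≤ Real.log (u / v) := by
      rw [hrw]
      have : (u ^ 2 - v ^ 2) / (2 * (u * v)) = -((v ^ 2 - u ^ 2) / (2 * (u * v))) := by
        ring
      rw [this]
      exact neg_le_neg hlog
    have h1 : u * ((u ^ 2 - v ^ 2) / (2 * (u * v))) ≤ u * Real.log (u / v) :=
      mul_le_mul_of_nonneg_left hkey hu.le
    have h1' : u * (u ^ 2 - v ^ 2) ≤ u * Real.log (u / v) * (2 * (u * v)) := by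
      have : u * ((u ^ 2 - v ^ 2) / (2 * (u * v))) = u * (u ^ 2 - v ^ 2) / (2 * (u * v)) := by
        ring
      rw [this, div_le_iff₀ (by positivity : (0:ℝ) < 2 * (u * v))] at h1
      linarith
    rw [ge_iff_le, div_le_iff₀ (by positivity : (0:ℝ) < 2 * (u + v))]
    nlinarith [h1', sq_nonneg (u - v), mul_nonneg hu.le (sq_nonneg (u - v)),
      mul_pos hu hv, mul_nonneg (mul_nonneg hu.le hu.le) (sq_nonneg (u - v))]
end

section
/- For nonnegative vectors u, v ∈ ℝ^n with positive entries, the generalized KL divergence D_gKL(u,v) := Σ_j (u_j log(u_j/v_j) − u_j + v_j) satisfies D_gKL(u,v) ≥ Σ_j (u_j − v_j)²/(2(u_j + v_j)). -/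
lemma gkl_pointwise (a b : ℝ) (ha : 0 < a) (hb : 0 < b) :
    (a - b) ^ 2 / (2 * (a + b)) ≤ a * Real.log (a / b) - a + b := by
  set sa := Real.sqrt a with hsa'
  set sb := Real.sqrt b with hsb'
  have hsa : 0 < sa := Real.sqrt_pos.mpr ha
  have hsb : 0 < sb := Real.sqrt_pos.mpr hb
  have ha2 : sa ^ 2 = a := Real.sq_sqrt ha.le
  have hb2 : sb ^ 2 = b := Real.sq_sqrt hb.le
  have hlog : Real.log (a / b) = 2 * (Real.log sa - Real.log sb) := by
    rw [Real.log_div ha.ne' hb.ne', ← ha2, ← hb2, Real.log_pow, Real.log_pow]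
    push_cast; ring
  have h1 : Real.log (sb / sa) ≤ sb / sa - 1 :=
    Real.log_le_sub_one_of_pos (div_pos hsb hsa)
  rw [Real.log_div hsb.ne' hsa.ne'] at h1
  have h2 : 1 - sb / sa ≤ Real.log sa - Real.log sb := by linarith
  have key : (sa - sb) ^ 2 ≤ a * Real.log (a / b) - a + b := by
    have h3 : a * (1 - sb / sa) ≤ a * (Real.log sa - Real.log sb) :=
      mul_le_mul_of_nonneg_left h2 ha.le
    have h4 : a * (1 - sb / sa) = a - sa * sb := by
      field_simp
      nlinarith [ha2]
    rw [hlog]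
    nlinarith [ha2, hb2]
  have hsum : (sa + sb) ^ 2 ≤ 2 * (a + b) := by nlinarith [sq_nonneg (sa - sb)]
  have hab : (a - b) ^ 2 = (sa - sb) ^ 2 * (sa + sb) ^ 2 := by nlinarith [ha2, hb2]
  have hpos : 0 < 2 * (a + b) := by linarith
  rw [div_le_iff₀ hpos]
  calc (a - b) ^ 2 = (sa - sb) ^ 2 * (sa + sb) ^ 2 := hab
    _ ≤ (sa - sb) ^ 2 * (2 * (a + b)) :=
        mul_le_mul_of_nonneg_left hsum (sq_nonneg _)
    _ ≤ (a * Real.log (a / b) - a + b) * (2 * (a + b)) :=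
        mul_le_mul_of_nonneg_right key hpos.le

/-- Generalized KL divergence lower bound by a chi-square type quantity. -/
theorem gkl_lower_bound (n : ℕ) (u v : Fin n → ℝ)
    (hu : ∀ j, 0 < u j) (hv : ∀ j, 0 < v j) :
    ∑ j, (u j * Real.log (u j / v j) - u j + v j) ≥
      ∑ j, (u j - v j) ^ 2 / (2 * (u j + v j)) := by
  exact Finset.sum_le_sum fun j _ => gkl_pointwise (u j) (v j) (hu j) (hv j)
end
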